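/- The 3×3 matrix A = [[0,1,1],[2,0,1],[-1,-1,0]] is a semimonotone star matrix, but its inverse A^{-1} = (1/3)[[-1,1,-1],[1,-1,-2],[2,1,2]] is not a semimonotone star matrix. Hence a principal pivot transform of a semimonotone star matrix need not be semimonotone star. -/

import Mathlib

/-- A is semimonotone (E₀). -/
def IsSemimonotone {n : ℕ} (A : Matrix (Fin n) (Fin n) ℝ) : Prop :=
  ∀ x : Fin n → ℝ, 0 ≤ x → x ≠ 0 → ∃ i, 0 < x i ∧ 0 ≤ A.mulVec x i

/-- A is semimonotone star (E₀ˢ). -/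
def IsSemimonotoneStar {n : ℕ} (A : Matrix (Fin n) (Fin n) ℝ) : Prop :=
  IsSemimonotone A ∧
    ∀ x : Fin n → ℝ, 0 ≤ x → 0 ≤ A.mulVec x → dotProduct x (A.mulVec x) = 0 →
      A.transpose.mulVec x ≤ 0

/-
A matrix whose upper triangle (diagonal included) is nonnegative is semimonotone: at the first
positive coordinate of x, the row meets nonzero coordinates only in nonnegative entries. The
matrix A is of this kind, and its last row (-1, -1, 0) forces x₀ = x₁ = 0 whenever x ≥ 0 and
Ax ≥ 0, after which Aᵀx = x₂ (-1, -1, 0) ≤ 0. On the other hand A⁻¹ has the negative diagonal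
entry -1/3, and a semimonotone matrix cannot have one (test x = e₀).
-/

theorem isSemimonotone_of_forall_le_nonneg {n : ℕ} {A : Matrix (Fin n) (Fin n) ℝ}
    (hA : ∀ i j, i ≤ j → 0 ≤ A i j) : IsSemimonotone A := by
  classical
  intro x hx hne
  have hsupp : (Finset.univ.filter fun j => 0 < x j).Nonempty := by
    by_contra! h
    refine hne (funext fun j => le_antisymm ?_ (hx j))
    simpa using Finset.filter_eq_empty_iff.1 h (Finset.mem_univ j)
  obtain ⟨i, hi, hmin⟩ := Finset.exists_min_image _ id hsupp
  simp only [Finset.mem_filter, Finset.mem_univ, true_and, id] at hi hmin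
  refine ⟨i, hi, ?_⟩
  change 0 ≤ ∑ j, A i j * x j
  refine Finset.sum_nonneg fun j _ => ?_
  rcases lt_or_ge j i with hji | hij
  · have hxj : x j = 0 := le_antisymm (not_lt.1 fun h => (hmin j h).not_gt hji) (hx j)
    simp [hxj]
  · exact mul_nonneg (hA i j hij) (hx j)

theorem not_isSemimonotone_of_diag_neg {n : ℕ} {A : Matrix (Fin n) (Fin n) ℝ} {i : Fin n}
    (h : A i i < 0) : ¬ IsSemimonotone A := by
  intro hA
  obtain ⟨j, hj, hAj⟩ := hA (Pi.single i 1) (Pi.single_nonneg.2 zero_le_one) (by simp)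
  obtain rfl : j = i := by
    by_contra hji
    simp [hji] at hj
  simp [Matrix.mulVec_single] at hAj
  linarith

theorem isSemimonotoneStar_example :
    IsSemimonotoneStar !![(0 : ℝ), 1, 1; 2, 0, 1; -1, -1, 0] := by
  refine ⟨isSemimonotone_of_forall_le_nonneg ?_, fun x hx hAx _ => ?_⟩
  · intro i j hij
    fin_cases i <;> fin_cases j <;> simp at hij ⊢
  · have hx' : ∀ i, 0 ≤ x i := hx
    have hlast : 0 ≤ -x 0 - x 1 := by
      simpa [Matrix.mulVec, dotProduct, Fin.sum_univ_three] using hAx 2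
    have hx0 : x 0 = 0 := by linarith [hx' 0, hx' 1]
    have hx1 : x 1 = 0 := by linarith [hx' 0, hx' 1]
    intro i
    fin_cases i <;> simp [Matrix.mulVec, dotProduct, Fin.sum_univ_three, hx0, hx1] <;>
      linarith [hx' 2]

theorem inv_example : (!![(0 : ℝ), 1, 1; 2, 0, 1; -1, -1, 0])⁻¹
    = (1 / 3 : ℝ) • !![(-1 : ℝ), 1, -1; 1, -1, -2; 2, 1, 2] := by
  refine Matrix.inv_eq_right_inv ?_
  rw [Matrix.mul_smul, Matrix.mul_fin_three]
  ext i j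
  fin_cases i <;> fin_cases j <;> norm_num

theorem stmt5 :
    IsSemimonotoneStar !![(0 : ℝ), 1, 1; 2, 0, 1; -1, -1, 0] ∧
      (!![(0 : ℝ), 1, 1; 2, 0, 1; -1, -1, 0])⁻¹
        = (1 / 3 : ℝ) • !![(-1 : ℝ), 1, -1; 1, -1, -2; 2, 1, 2] ∧
      ¬ IsSemimonotoneStar ((1 / 3 : ℝ) • !![(-1 : ℝ), 1, -1; 1, -1, -2; 2, 1, 2]) :=
  ⟨isSemimonotoneStar_example, inv_example,
    fun h => not_isSemimonotone_of_diag_neg (i := 0) (by norm_num) h.1⟩
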